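/- Under the proportional-power CSF with exponent a/(a−1) = 2 (i.e., a = 2) and common value v > 0, every Nash equilibrium has aggregate effort exactly v; moreover, the Nash equilibria are exactly the tuples where two contestants each exert v/2 and all others exert 0. -/

import Mathlib

/-!
Once contestant `i` faces an active rival, its payoff from effort `y` is `v y² / (y² + T) - y`,
where `T` is the rivals' sum of squared efforts. At an equilibrium everybody faces one: an
unopposed active contestant could halve its effort, and if nobody is active anyone could win
outright with effort `v / 4`. The first-order condition `2 v x T = (x² + T)²` and participation
`x² + T ≤ v x` then force all active efforts to be equal; with `m` active contestants of effort
`c` they read `2 v (m - 1) = m² c` and `m c ≤ v`, whence `m = 2` and `c = v / 2`. Conversely,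
against rivals with `T ≥ v² / 4` no effort earns a positive payoff.
-/

open Finset

noncomputable def payoff {N : Type*} (f : (N → ℝ) → N → ℝ) (v : N → ℝ)
    (x : N → ℝ) (i : N) : ℝ := f x i * v i - x i

/-- Pure-strategy Nash equilibrium of the contest game with strategy sets ℝ≥0. -/
def IsNash {N : Type*} [DecidableEq N] (f : (N → ℝ) → N → ℝ) (v : N → ℝ)
    (x : N → ℝ) : Prop :=
  (∀ i, 0 ≤ x i) ∧
  ∀ i : N, ∀ y : ℝ, 0 ≤ y →
    payoff f v (Function.update x i y) i ≤ payoff f v x i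

/-- `f` is a contest success function: on nonnegative effort tuples it returns a
probability vector over contestants. -/
def IsCSF {N : Type*} [Fintype N] (f : (N → ℝ) → N → ℝ) : Prop :=
  ∀ x : N → ℝ, (∀ i, 0 ≤ x i) →
    (∀ i, 0 ≤ f x i) ∧ ∑ i, f x i = 1

/-- The payoff of a contestant with effort `y` whose rivals' squared efforts sum to `T > 0`. -/
noncomputable def quadPayoff (v T y : ℝ) : ℝ := v * y ^ 2 / (y ^ 2 + T) - y

namespace quadPayoff

variable {v T : ℝ}

@[simp] lemma zero_right (v T : ℝ) : quadPayoff v T 0 = 0 := by simp [quadPayoff]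

lemma hasDerivAt (hT : 0 < T) (y : ℝ) :
    HasDerivAt (quadPayoff v T) (2 * v * y * T / (y ^ 2 + T) ^ 2 - 1) y := by
  have hne : y ^ 2 + T ≠ 0 := by positivity
  have hnum : HasDerivAt (fun y : ℝ => v * y ^ 2) (v * (2 * y)) y := by
    simpa using (hasDerivAt_pow 2 y).const_mul v
  have hden : HasDerivAt (fun y : ℝ => y ^ 2 + T) (2 * y) y := by
    simpa using (hasDerivAt_pow 2 y).add_const T
  refine ((hnum.div hden hne).sub (hasDerivAt_id y)).congr_deriv ?_
  field_simp
  ring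

lemma foc (hT : 0 < T) {x : ℝ} (hx : 0 < x)
    (hmax : ∀ y, 0 ≤ y → quadPayoff v T y ≤ quadPayoff v T x) :
    2 * v * x * T = (x ^ 2 + T) ^ 2 := by
  have hloc : IsLocalMax (quadPayoff v T) x := by
    filter_upwards [eventually_gt_nhds hx] with y hy using hmax y hy.le
  have h0 := hloc.hasDerivAt_eq_zero (hasDerivAt hT x)
  have hne : (x ^ 2 + T) ^ 2 ≠ 0 := by positivity
  field_simp at h0
  linarith

lemma participation (hT : 0 ≤ T) {x : ℝ} (hx : 0 < x) (h : 0 ≤ quadPayoff v T x) :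
    x ^ 2 + T ≤ v * x := by
  have hden : 0 < x ^ 2 + T := by positivity
  rw [quadPayoff, sub_nonneg, le_div_iff₀ hden] at h
  nlinarith

lemma nonpos (hT : v ^ 2 / 4 ≤ T) {y : ℝ} (hy : 0 ≤ y) : quadPayoff v T y ≤ 0 := by
  rcases hy.eq_or_lt with rfl | hy
  · simp
  have hden : 0 < y ^ 2 + T := by nlinarith [sq_nonneg v]
  rw [quadPayoff, sub_nonpos, div_le_iff₀ hden]
  nlinarith [mul_nonneg hy.le (sq_nonneg (y - v / 2))]

lemma half_eq_zero : quadPayoff v (v ^ 2 / 4) (v / 2) = 0 := by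
  rw [quadPayoff]
  field_simp
  ring

end quadPayoff

lemma eq_of_foc_of_le {v S a b : ℝ} (hv : 0 < v) (ha : 0 < a) (hb : 0 < b)
    (hfa : 2 * v * a * (S - a ^ 2) = S ^ 2) (hfb : 2 * v * b * (S - b ^ 2) = S ^ 2)
    (hpa : S ≤ v * a) (hpb : S ≤ v * b) : a = b := by
  by_contra hab
  have hS : S = a ^ 2 + a * b + b ^ 2 := by
    have hprod : (2 * v * (a - b)) * (S - (a ^ 2 + a * b + b ^ 2)) = 0 := by
      linear_combination hfa - hfb
    have := (mul_eq_zero.mp hprod).resolve_left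
      (mul_ne_zero (by positivity) (sub_ne_zero.mpr hab))
    linarith
  have hSpos : 0 < S := by nlinarith [mul_pos ha hb]
  have ga : a * b + b ^ 2 ≤ a ^ 2 := by
    nlinarith [mul_nonneg (sub_nonneg.mpr hpa) (mul_nonneg hb.le (add_pos ha hb).le)]
  have gb : a * b + a ^ 2 ≤ b ^ 2 := by
    nlinarith [mul_nonneg (sub_nonneg.mpr hpb) (mul_nonneg ha.le (add_pos ha hb).le)]
  nlinarith [mul_pos ha hb]

lemma eq_two_and_eq_half_of_foc_of_le {v c : ℝ} {m : ℕ} (hc : 0 < c) (hm : m ≠ 0)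
    (hfoc : 2 * v * c * (m * c ^ 2 - c ^ 2) = (m * c ^ 2) ^ 2) (hp : m * c ^ 2 ≤ v * c) :
    m = 2 ∧ c = v / 2 := by
  have hkey : 2 * v * (m - 1) = m ^ 2 * c := by
    have : c ^ 3 * (2 * v * (m - 1)) = c ^ 3 * (m ^ 2 * c) := by linear_combination hfoc
    exact mul_left_cancel₀ (pow_ne_zero 3 hc.ne') this
  have hvc : m * c ≤ v := le_of_mul_le_mul_right (by linarith) hc
  obtain rfl | hm2 : m = 1 ∨ 2 ≤ m := by omega
  · norm_num at hkey
    linarith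
  have hm2' : (2 : ℝ) ≤ m := by exact_mod_cast hm2
  -- `m ^ 2 * c = 2 * v * (m - 1) ≥ 2 * m * c * (m - 1)` forces `m ≤ 2`
  have hle : (m : ℝ) ≤ 2 := by
    have hmc : 0 < m * c := by positivity
    nlinarith [mul_nonneg (by linarith : (0 : ℝ) ≤ m - 1) (sub_nonneg.mpr hvc)]
  have hm : (m : ℝ) = 2 := le_antisymm hle hm2'
  exact ⟨by exact_mod_cast hm, by rw [hm] at hkey; linarith⟩

lemma update_nonneg {N : Type*} [DecidableEq N] {x : N → ℝ} (hx : ∀ l, 0 ≤ x l) (i : N)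
    {y : ℝ} (hy : 0 ≤ y) : ∀ l, 0 ≤ Function.update x i y l := by
  intro l
  rcases eq_or_ne l i with rfl | h
  · simpa using hy
  · simpa [h] using hx l

section Contest

variable {N : Type*} [Fintype N] [DecidableEq N]

def IsSquareTullock (n : ℕ) (f : (N → ℝ) → N → ℝ) : Prop :=
  ∀ x : N → ℝ, (∀ l, 0 ≤ x l) → ∀ i : N,
    f x i = if ∃ j, 0 < x j then x i ^ 2 / ∑ j, x j ^ 2 else 1 / (n : ℝ)

def rivalSq (x : N → ℝ) (i : N) : ℝ := ∑ j ∈ univ.erase i, x j ^ 2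

lemma sum_sq_eq_add_rivalSq (x : N → ℝ) (i : N) : ∑ j, x j ^ 2 = x i ^ 2 + rivalSq x i :=
  (add_sum_erase _ _ (mem_univ i)).symm

lemma rivalSq_update (x : N → ℝ) (i : N) (y : ℝ) :
    rivalSq (Function.update x i y) i = rivalSq x i :=
  sum_congr rfl fun _ hj => by rw [Function.update_of_ne (ne_of_mem_erase hj)]

lemma rivalSq_eq_zero {x : N → ℝ} {i : N} (h : ∀ j, j ≠ i → x j = 0) : rivalSq x i = 0 :=
  sum_eq_zero fun j hj => by rw [h j (ne_of_mem_erase hj)]; ring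

lemma rivalSq_pos {x : N → ℝ} {i j : N} (hji : j ≠ i) (hj : 0 < x j) : 0 < rivalSq x i :=
  lt_of_lt_of_le (pow_pos hj 2)
    (single_le_sum (fun l _ => sq_nonneg (x l)) (mem_erase.mpr ⟨hji, mem_univ j⟩))

variable {n : ℕ} {f : (N → ℝ) → N → ℝ} {v : ℝ} {x : N → ℝ}

lemma payoff_update_eq_quadPayoff (hf : IsSquareTullock n f) (hx : ∀ l, 0 ≤ x l) {i j : N}
    (hji : j ≠ i) (hj : 0 < x j) {y : ℝ} (hy : 0 ≤ y) :
    payoff f (fun _ => v) (Function.update x i y) i = quadPayoff v (rivalSq x i) y := by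
  have hactive : ∃ l, 0 < Function.update x i y l := ⟨j, by rwa [Function.update_of_ne hji]⟩
  rw [payoff, hf _ (update_nonneg hx i hy), if_pos hactive, sum_sq_eq_add_rivalSq _ i,
    rivalSq_update, Function.update_self, quadPayoff]
  ring

lemma payoff_update_of_rivalSq_eq_zero (hf : IsSquareTullock n f) (hx : ∀ l, 0 ≤ x l) {i : N}
    (hr : rivalSq x i = 0) {y : ℝ} (hy : 0 < y) :
    payoff f (fun _ => v) (Function.update x i y) i = v - y := by
  have hactive : ∃ l, 0 < Function.update x i y l := ⟨i, by rwa [Function.update_self]⟩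
  rw [payoff, hf _ (update_nonneg hx i hy.le), if_pos hactive, sum_sq_eq_add_rivalSq _ i,
    rivalSq_update, hr, Function.update_self, add_zero, div_self (by positivity), one_mul]

lemma exists_pos_rival_of_isNash (hf : IsSquareTullock n f) (hn : 2 ≤ n) (hv : 0 < v)
    (hx : IsNash f (fun _ => v) x) (i : N) : ∃ j, j ≠ i ∧ 0 < x j := by
  obtain ⟨hx0, hbest⟩ := hx
  by_contra! hnone
  have hothers : ∀ j, j ≠ i → x j = 0 := fun j hj => le_antisymm (hnone j hj) (hx0 j)
  have hr : rivalSq x i = 0 := rivalSq_eq_zero hothers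
  rcases (hx0 i).eq_or_lt with hxi | hxi
  · have hidle : ¬ ∃ j, 0 < x j := by
      rintro ⟨j, hj⟩
      rcases eq_or_ne j i with rfl | hji
      · exact hxi.not_lt hj
      · exact hj.ne' (hothers j hji)
    have hdev := hbest i (v / 4) (by positivity)
    rw [payoff_update_of_rivalSq_eq_zero hf hx0 hr (by positivity), payoff, hf x hx0,
      if_neg hidle, ← hxi] at hdev
    have hn' : (2 : ℝ) ≤ n := by exact_mod_cast hn
    have : 1 / (n : ℝ) * v ≤ v / 2 := by
      rw [one_div_mul_eq_div, div_le_div_iff₀ (by positivity) two_pos]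
      nlinarith
    linarith
  · have hdev := hbest i (x i / 2) (by positivity)
    have hstay := payoff_update_of_rivalSq_eq_zero (v := v) hf hx0 hr hxi
    rw [Function.update_eq_self] at hstay
    rw [payoff_update_of_rivalSq_eq_zero hf hx0 hr (by positivity), hstay] at hdev
    linarith

lemma isNash_iff_forall_quadPayoff_le (hf : IsSquareTullock n f) (hx : ∀ l, 0 ≤ x l)
    (hr : ∀ i, ∃ j, j ≠ i ∧ 0 < x j) :
    IsNash f (fun _ => v) x ↔
      ∀ i y, 0 ≤ y → quadPayoff v (rivalSq x i) y ≤ quadPayoff v (rivalSq x i) (x i) := by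
  have hpay : ∀ i y, 0 ≤ y →
      payoff f (fun _ => v) (Function.update x i y) i = quadPayoff v (rivalSq x i) y := by
    intro i y hy
    obtain ⟨j, hji, hj⟩ := hr i
    exact payoff_update_eq_quadPayoff hf hx hji hj hy
  have hstay : ∀ i, payoff f (fun _ => v) x i = quadPayoff v (rivalSq x i) (x i) := fun i => by
    simpa using hpay i (x i) (hx i)
  refine ⟨fun h i y hy => ?_, fun h => ⟨hx, fun i y hy => ?_⟩⟩
  · rw [← hpay i y hy, ← hstay]; exact h.2 i y hy
  · rw [hpay i y hy, hstay]; exact h i y hy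

lemma foc_of_isNash (hf : IsSquareTullock n f) (hn : 2 ≤ n) (hv : 0 < v)
    (hx : IsNash f (fun _ => v) x) {i : N} (hi : 0 < x i) :
    2 * v * x i * (∑ j, x j ^ 2 - x i ^ 2) = (∑ j, x j ^ 2) ^ 2 ∧ ∑ j, x j ^ 2 ≤ v * x i := by
  have hr := exists_pos_rival_of_isNash hf hn hv hx
  have hmax := (isNash_iff_forall_quadPayoff_le hf hx.1 hr).1 hx i
  obtain ⟨j, hji, hj⟩ := hr i
  have hT := rivalSq_pos hji hj
  rw [sum_sq_eq_add_rivalSq x i, add_sub_cancel_left]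
  exact ⟨quadPayoff.foc hT hi hmax,
    quadPayoff.participation hT.le hi (by simpa using hmax 0 le_rfl)⟩

theorem exists_card_eq_two_of_isNash [Nonempty N] (hf : IsSquareTullock n f) (hn : 2 ≤ n)
    (hv : 0 < v) (hx : IsNash f (fun _ => v) x) :
    ∃ A : Finset N, A.card = 2 ∧ ∀ i, x i = if i ∈ A then v / 2 else 0 := by
  obtain ⟨a, -, ha⟩ := exists_pos_rival_of_isNash hf hn hv hx (Classical.arbitrary N)
  set A := univ.filter (fun i => 0 < x i)
  have hxA : ∀ i, x i = if i ∈ A then x a else 0 := by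
    intro i
    by_cases hi : 0 < x i
    · obtain ⟨hfi, hpi⟩ := foc_of_isNash hf hn hv hx hi
      obtain ⟨hfa, hpa⟩ := foc_of_isNash hf hn hv hx ha
      rw [if_pos (by simpa [A] using hi)]
      exact eq_of_foc_of_le hv hi ha hfi hfa hpi hpa
    · simp [A, le_antisymm (not_lt.mp hi) (hx.1 i)]
  have hS : ∑ j, x j ^ 2 = A.card * x a ^ 2 := by
    conv_lhs => arg 2; ext j; rw [hxA j]
    simp [apply_ite (· ^ 2), sum_ite_mem]
  obtain ⟨hfoc, hpart⟩ := foc_of_isNash hf hn hv hx ha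
  rw [hS] at hfoc hpart
  obtain ⟨hcard, hc⟩ := eq_two_and_eq_half_of_foc_of_le ha
    (card_ne_zero_of_mem (by simpa [A] using ha)) hfoc hpart
  exact ⟨A, hcard, by rwa [← hc]⟩

theorem isNash_of_card_eq_two (hf : IsSquareTullock n f) (hv : 0 < v) {A : Finset N}
    (hA : A.card = 2) (hxA : ∀ i, x i = if i ∈ A then v / 2 else 0) :
    IsNash f (fun _ => v) x := by
  have hx : ∀ i, 0 ≤ x i := fun i => by rw [hxA i]; split_ifs <;> positivity
  have hr : ∀ i, ∃ j, j ≠ i ∧ 0 < x j := by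
    intro i
    obtain ⟨j, hjA, hji⟩ := exists_mem_ne (by omega : 1 < A.card) i
    exact ⟨j, hji, by rw [hxA j, if_pos hjA]; positivity⟩
  have hS : ∑ j, x j ^ 2 = v ^ 2 / 2 := by
    simp_rw [hxA, apply_ite (· ^ 2), zero_pow two_ne_zero, sum_ite_mem, univ_inter, sum_const,
      hA, nsmul_eq_mul]
    ring
  refine (isNash_iff_forall_quadPayoff_le hf hx hr).2 fun i y hy => ?_
  have hT : rivalSq x i = v ^ 2 / 2 - x i ^ 2 := by linarith [sum_sq_eq_add_rivalSq x i]
  by_cases hi : i ∈ A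
  · have hxi : x i = v / 2 := by rw [hxA i, if_pos hi]
    rw [hT, hxi, show v ^ 2 / 2 - (v / 2) ^ 2 = v ^ 2 / 4 by ring, quadPayoff.half_eq_zero]
    exact quadPayoff.nonpos le_rfl hy
  · have hxi : x i = 0 := by rw [hxA i, if_neg hi]
    rw [hxi, quadPayoff.zero_right]
    exact quadPayoff.nonpos (by rw [hT, hxi]; nlinarith) hy

end Contest

theorem stmt_12 {N : Type*} [Fintype N] [DecidableEq N]
    (n : ℕ) (hn : Fintype.card N = n) (hn2 : 2 ≤ n)
    (v : ℝ) (hv : 0 < v)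
    (f : (N → ℝ) → N → ℝ)
    (hfdef : ∀ x : N → ℝ, (∀ l, 0 ≤ x l) → ∀ i : N,
      f x i = if ∃ j, 0 < x j then x i ^ 2 / ∑ j, x j ^ 2 else 1 / (n : ℝ)) :
    (∀ x : N → ℝ, IsNash f (fun _ => v) x → ∑ i, x i = v) ∧
      (∀ x : N → ℝ, IsNash f (fun _ => v) x ↔
        ∃ A : Finset N, A.card = 2 ∧ ∀ i, x i = if i ∈ A then v / 2 else 0) := by
  have : Nonempty N := Fintype.card_pos_iff.mp (by omega)
  have hchar : ∀ x : N → ℝ, IsNash f (fun _ => v) x ↔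
      ∃ A : Finset N, A.card = 2 ∧ ∀ i, x i = if i ∈ A then v / 2 else 0 := fun x =>
    ⟨exists_card_eq_two_of_isNash hfdef hn2 hv,
      fun ⟨_, hA, hxA⟩ => isNash_of_card_eq_two hfdef hv hA hxA⟩
  refine ⟨fun x hx => ?_, hchar⟩
  obtain ⟨A, hA, hxA⟩ := (hchar x).1 hx
  simp_rw [hxA, sum_ite_mem, univ_inter, sum_const, hA, two_nsmul, add_halves]
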